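/- Let E be a Banach space, R : E → E a bijective bounded linear operator, and F : E → E a bounded finite-rank operator. Then R - F is injective if and only if R - F is surjective. -/

import Mathlib

/-!
Writing `R - F = (1 - T) R` with `T = F R⁻¹` of finite rank, it suffices to treat `1 - T`.
This map preserves the finite-dimensional space `range T`, has its kernel inside it, and
is the identity modulo it; hence `1 - T` is injective (resp. surjective) exactly when its
restriction to `range T` is, and for an endomorphism of a finite-dimensional space these two
properties coincide.
-/

open Function

namespace LinearMap

variable {K V W : Type*} [DivisionRing K] [AddCommGroup V] [Module K V]
  [AddCommGroup W] [Module K W]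

theorem one_sub_mem_range (T : Module.End K V) (x : V) (hx : x ∈ range T) :
    (1 - T) x ∈ range T :=
  sub_mem hx (mem_range_self T x)

theorem ker_one_sub_le_range (T : Module.End K V) : ker (1 - T) ≤ range T := fun x hx ↦
  ⟨x, (sub_eq_zero.mp hx).symm⟩

theorem injective_one_sub_iff_restrict (T : Module.End K V) :
    Injective ⇑(1 - T) ↔ Injective ((1 - T).restrict (one_sub_mem_range T)) := by
  rw [injective_restrict_iff, disjoint_comm,
    disjoint_of_le_iff_left_eq_bot (ker_one_sub_le_range T), ker_eq_bot]

theorem surjective_one_sub_iff_restrict (T : Module.End K V) :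
    Surjective ⇑(1 - T) ↔ Surjective ((1 - T).restrict (one_sub_mem_range T)) := by
  constructor
  · rintro hsurj ⟨w, hw⟩
    obtain ⟨x, hx⟩ := hsurj w
    have hxW : x ∈ range T := by
      have hx' : x = w + T x := by rw [← hx]; simp
      exact hx' ▸ add_mem hw (mem_range_self T x)
    exact ⟨⟨x, hxW⟩, Subtype.ext hx⟩
  · intro hsurj y
    obtain ⟨z, hz⟩ := hsurj ⟨T y, mem_range_self T y⟩
    have hz' : (z : V) - T z = T y := congrArg Subtype.val hz
    refine ⟨y + z, ?_⟩
    simp only [sub_apply, Module.End.one_apply, map_add]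
    rw [← hz']
    abel

theorem injective_one_sub_iff_surjective (T : Module.End K V) [FiniteDimensional K (range T)] :
    Injective ⇑(1 - T) ↔ Surjective ⇑(1 - T) :=
  (injective_one_sub_iff_restrict T).trans <|
    injective_iff_surjective.trans (surjective_one_sub_iff_restrict T).symm

theorem injective_sub_iff_surjective (e : V ≃ₗ[K] W) (F : V →ₗ[K] W)
    [FiniteDimensional K (range F)] :
    Injective ⇑((e : V →ₗ[K] W) - F) ↔ Surjective ⇑((e : V →ₗ[K] W) - F) := by
  set T : Module.End K W := F ∘ₗ (e.symm : W →ₗ[K] V)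
  have : FiniteDimensional K (range T) :=
    Submodule.finiteDimensional_of_le (range_comp_le_range _ _)
  have hfactor : ⇑((e : V →ₗ[K] W) - F) = ⇑(1 - T) ∘ e := by
    ext x
    simp [T]
  rw [hfactor, Injective.of_comp_iff' _ e.bijective, Surjective.of_comp_iff _ e.surjective]
  exact injective_one_sub_iff_surjective T

end LinearMap

theorem stmt_17_general {𝕜 E : Type*} [RCLike 𝕜] [NormedAddCommGroup E] [NormedSpace 𝕜 E]
    (R F : E →L[𝕜] E) (hR : Function.Bijective ⇑R)
    [FiniteDimensional 𝕜 ↥(LinearMap.range (F : E →ₗ[𝕜] E))] :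
    Function.Injective ⇑(R - F) ↔ Function.Surjective ⇑(R - F) :=
  LinearMap.injective_sub_iff_surjective (LinearEquiv.ofBijective (R : E →ₗ[𝕜] E) hR) F

theorem stmt_17 {𝕜 E : Type*} [RCLike 𝕜] [NormedAddCommGroup E] [NormedSpace 𝕜 E]
    [CompleteSpace E] (R F : E →L[𝕜] E) (hR : Function.Bijective ⇑R)
    [FiniteDimensional 𝕜 ↥(LinearMap.range (F : E →ₗ[𝕜] E))] :
    Function.Injective ⇑(R - F) ↔ Function.Surjective ⇑(R - F) :=
  stmt_17_general R F hR
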